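/- Let f(q) = ⟨p_t - q, ℓ_t⟩ - D_ψ(q, p_t) where ψ(p) = (1/β)Σ_i ln(1/p_i) and β·p_{t,i}·ℓ_{t,i} > -1 for all i. Then the unconstrained maximizer over q ∈ ℝ_+^K is q⋆ with coordinates q⋆_i = (1/p_{t,i} + β·ℓ_{t,i})^{-1}, and the maximum value equals D_ψ(p_t, q⋆) = (1/β)·Σ_i h(1 + β·p_{t,i}·ℓ_{t,i}) where h(x) = x - 1 - ln x; moreover if β·p_{t,i}·ℓ_{t,i} ≥ -1/2 for all i then D_ψ(p_t, q⋆) ≤ β·Σ_i p_{t,i}²·ℓ_{t,i}². -/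

import Mathlib

/-!
The objective decomposes over coordinates, and for a Bregman divergence the three-point identity
together with the stationarity condition `q⋆ᵢ⁻¹ = pᵢ⁻¹ + β ℓᵢ` gives
`f q⋆ - f q = D_ψ(q, q⋆) ≥ 0` for every positive `q`. Taking `q = p`, where `f p = 0`, yields
`f q⋆ = D_ψ(p, q⋆)`, and `pᵢ / q⋆ᵢ = 1 + β pᵢ ℓᵢ` turns this into the sum of `h`. The final
bound is `log (1 + x) ≥ x - x²` for `x ≥ -1/2`.
-/

open Finset Real

/-- The Bregman divergence of `-log` on `(0, ∞)`. -/
noncomputable def negLogBregman (a b : ℝ) : ℝ := log (b / a) + a / b - 1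

lemma negLogBregman_eq (a b : ℝ) : negLogBregman a b = a / b - 1 - log (a / b) := by
  rw [negLogBregman, ← inv_div, log_inv]
  ring

lemma negLogBregman_self {a : ℝ} (ha : a ≠ 0) : negLogBregman a a = 0 := by
  simp [negLogBregman, ha]

lemma negLogBregman_nonneg {a b : ℝ} (ha : 0 < a) (hb : 0 < b) : 0 ≤ negLogBregman a b := by
  rw [negLogBregman_eq]
  linarith [log_le_sub_one_of_pos (div_pos ha hb)]

lemma negLogBregman_three_point {a b c : ℝ} (ha : a ≠ 0) (hb : b ≠ 0) (hc : c ≠ 0) :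
    negLogBregman a c - negLogBregman b c - negLogBregman a b = (a - b) * (c⁻¹ - b⁻¹) := by
  simp only [negLogBregman]
  rw [log_div hc ha, log_div hc hb, log_div hb ha]
  field_simp
  ring

lemma sub_sq_le_log_one_add {x : ℝ} (hx : -(1 / 2) ≤ x) : x - x ^ 2 ≤ log (1 + x) := by
  rcases le_total 0 x with hx₀ | hx₀
  · have hlog := one_sub_inv_le_log_of_pos (by linarith : (0 : ℝ) < 1 + x)
    have hinv : 1 - (1 + x)⁻¹ = x / (1 + x) := by field_simp; ring
    rw [hinv, div_le_iff₀ (by linarith)] at hlog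
    nlinarith [pow_nonneg hx₀ 3]
  · -- `(1 + x) · exp (x² - x) ≥ 1`, bounding the exponential by its quadratic Taylor polynomial
    set u := x ^ 2 - x with hu
    have hexp := quadratic_le_exp_of_nonneg (by nlinarith : 0 ≤ u)
    have hpoly : 1 ≤ (1 + x) * (1 + u + u ^ 2 / 2) := by
      rw [hu]
      nlinarith [sq_nonneg x, mul_nonneg (sq_nonneg x) (by nlinarith : 0 ≤ 1 + x - x ^ 2 + x ^ 3)]
    have hprod : 1 ≤ (1 + x) * exp u :=
      hpoly.trans (mul_le_mul_of_nonneg_left hexp (by linarith))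
    have := log_le_log one_pos hprod
    rw [log_one, log_mul (by linarith) (exp_pos u).ne', log_exp] at this
    linarith

lemma objective_sub_objective_eq_negLogBregman {β P Q S L : ℝ} (hβ : β ≠ 0) (hP : P ≠ 0)
    (hQ : Q ≠ 0) (hS : S ≠ 0) (hstat : S⁻¹ = P⁻¹ + β * L) :
    ((P - S) * L - β⁻¹ * negLogBregman S P) - ((P - Q) * L - β⁻¹ * negLogBregman Q P)
      = β⁻¹ * negLogBregman Q S := by
  have h3 := negLogBregman_three_point hQ hS hP
  rw [hstat] at h3
  linear_combination β⁻¹ * h3 - (Q - S) * L * inv_mul_cancel₀ hβ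

/-- Explicit maximizer of the log-barrier stability problem and the resulting
bounds. -/
theorem log_barrier_maximizer (K : ℕ) (β : ℝ) (hβ : 0 < β)
    (p ℓ : Fin K → ℝ) (hp : ∀ i, 0 < p i)
    (hℓ : ∀ i, β * p i * ℓ i > -1)
    (D : (Fin K → ℝ) → (Fin K → ℝ) → ℝ)
    (hD : D = fun a b => (1/β) * ∑ i, (Real.log (b i / a i) + a i / b i - 1))
    (f : (Fin K → ℝ) → ℝ)
    (hf : f = fun q => (∑ i, (p i - q i) * ℓ i) - D q p)
    (qstar : Fin K → ℝ) (hqstar : qstar = fun i => (1 / p i + β * ℓ i)⁻¹) :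
    (∀ q : Fin K → ℝ, (∀ i, 0 < q i) → f q ≤ f qstar)
    ∧ f qstar = D p qstar
    ∧ D p qstar = (1/β) * ∑ i,
        ((1 + β * p i * ℓ i) - 1 - Real.log (1 + β * p i * ℓ i))
    ∧ ((∀ i, β * p i * ℓ i ≥ -(1/2)) →
        D p qstar ≤ β * ∑ i, (p i)^2 * (ℓ i)^2) := by
  have hD' : ∀ a b, D a b = β⁻¹ * ∑ i, negLogBregman (a i) (b i) := by
    simp [hD, negLogBregman]
  have hstat : ∀ i, (qstar i)⁻¹ = (p i)⁻¹ + β * ℓ i := by simp [hqstar]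
  have hp_div : ∀ i, p i / qstar i = 1 + β * p i * ℓ i := fun i => by
    rw [div_eq_mul_inv, hstat, mul_add, mul_inv_cancel₀ (hp i).ne']
    ring
  have hqstar_pos : ∀ i, 0 < qstar i := fun i => by
    have h : 0 < p i / qstar i := by rw [hp_div]; linarith [hℓ i]
    exact (div_pos_iff_of_pos_left (hp i)).mp h
  have gap : ∀ q, (∀ i, 0 < q i) → f qstar - f q = D q qstar := fun q hq => by
    simp only [hf, hD', mul_sum, ← sum_sub_distrib]
    exact sum_congr rfl fun i _ =>
      objective_sub_objective_eq_negLogBregman hβ.ne' (hp i).ne' (hq i).ne' (hqstar_pos i).ne'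
        (hstat i)
  have hD_nonneg : ∀ q, (∀ i, 0 < q i) → 0 ≤ D q qstar := fun q hq => by
    rw [hD']
    exact mul_nonneg (inv_nonneg.mpr hβ.le)
      (sum_nonneg fun i _ => negLogBregman_nonneg (hq i) (hqstar_pos i))
  have hfp : f p = 0 := by
    simp [hf, hD', negLogBregman_self (hp _).ne']
  have hD_val : D p qstar = (1/β) * ∑ i,
      ((1 + β * p i * ℓ i) - 1 - Real.log (1 + β * p i * ℓ i)) := by
    simp only [hD', negLogBregman_eq, hp_div, one_div]
  refine ⟨fun q hq => by linarith [gap q hq, hD_nonneg q hq], by linarith [gap p hp], hD_val,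
    fun hhalf => ?_⟩
  calc D p qstar ≤ (1/β) * ∑ i, (β * p i * ℓ i) ^ 2 := by
        rw [hD_val]
        gcongr with i
        linarith [sub_sq_le_log_one_add (hhalf i)]
    _ = β * ∑ i, (p i)^2 * (ℓ i)^2 := by
        rw [mul_sum, mul_sum]
        exact sum_congr rfl fun i _ => by field_simp
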